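/- arXiv:1404.0931 — 3 statements merged into one kernel-verified Lean document; each statement's English description precedes it below -/
import Mathlib

section
/- Let n ≥ 6 and let T be a tree on n vertices that is not a path and whose degree sequence is not (3, 2, …, 2, 1, 1, 1). Then irr_t(T) ≥ 6n − 20, with equality if and only if the degree sequence of T is (3, 3, 2, …, 2, 1, 1, 1, 1). -/
open Finset

/-- The total irregularity of a graph: half the sum over all ordered pairs of
vertices of the absolute difference of degrees. -/
def irrT {V : Type*} [Fintype V] (G : SimpleGraph V) [DecidableRel G.Adj] : ℤ :=
  (∑ u : V, ∑ v : V, |(G.degree u : ℤ) - (G.degree v : ℤ)|) / 2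

/-- The degree sequence of a graph, as a multiset of vertex degrees. -/
def degSeq {V : Type*} [Fintype V] (G : SimpleGraph V) [DecidableRel G.Adj] : Multiset ℕ :=
  Finset.univ.val.map (fun v => G.degree v)

/-!
Let `L` and `b` be the numbers of vertices of degree 1 and 2 and `R` the multiset of degrees
`≥ 3`. The handshake identity `∑ d = 2n - 2` gives `∑_{x ∈ R} (x - 2) = L - 2`, hence
`|R| ≤ L - 2`, and splitting `∑_{u,v} |d u - d v|` by degree class gives exactly
`2 irr_t = 2L(n - 2) + 2b(L - 2) + ∑_{x,y ∈ R} |x - y|`.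
For `L ≤ 3` the degree sequence is forced to be the excluded ones, for `L ≥ 5` the right-hand
side exceeds `12n - 40`, and for `L = 4` it equals `12n - 40 + 4(2 - |R|) + ∑_{x,y ∈ R} |x - y|`,
which is minimal exactly when `R = {3, 3}`.
-/

namespace Multiset

def absDiffSum (M N : Multiset ℕ) : ℤ :=
  (M.map fun x : ℕ => (N.map fun y : ℕ => |(x : ℤ) - y|).sum).sum

lemma absDiffSum_add_left (M₁ M₂ N : Multiset ℕ) :
    absDiffSum (M₁ + M₂) N = absDiffSum M₁ N + absDiffSum M₂ N := by
  simp only [absDiffSum, map_add, sum_add]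

lemma absDiffSum_comm (M N : Multiset ℕ) : absDiffSum M N = absDiffSum N M := by
  simp only [absDiffSum]
  rw [sum_map_sum_map]
  simp_rw [abs_sub_comm]

lemma absDiffSum_add_right (M N₁ N₂ : Multiset ℕ) :
    absDiffSum M (N₁ + N₂) = absDiffSum M N₁ + absDiffSum M N₂ := by
  rw [absDiffSum_comm, absDiffSum_add_left, absDiffSum_comm N₁, absDiffSum_comm N₂]

lemma absDiffSum_replicate_left_of_le {k a : ℕ} {N : Multiset ℕ} (h : ∀ y ∈ N, a ≤ y) :
    absDiffSum (replicate k a) N = k * ((N.sum : ℤ) - a * card N) := by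
  have hrow : (N.map fun y : ℕ => |(a : ℤ) - y|) = N.map fun y : ℕ => (y : ℤ) - a :=
    map_congr rfl fun y hy => by
      rw [abs_sub_comm, abs_of_nonneg (sub_nonneg.2 (Nat.cast_le.2 (h y hy)))]
  simp [absDiffSum, hrow, sum_map_sub, Nat.cast_multiset_sum, mul_comm]

lemma absDiffSum_nonneg (M N : Multiset ℕ) : 0 ≤ absDiffSum M N :=
  sum_nonneg fun _ hx => by
    obtain ⟨x, -, rfl⟩ := mem_map.1 hx
    exact sum_nonneg fun _ hy => by
      obtain ⟨y, -, rfl⟩ := mem_map.1 hy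
      exact abs_nonneg _

lemma even_absDiffSum_self (M : Multiset ℕ) : Even (absDiffSum M M) := by
  have hsplit : ∀ x y : ℤ, |x - y| = max (x - y) 0 + max (y - x) 0 := by
    intro x y; rcases le_total x y with h | h
    · rw [abs_of_nonpos (by linarith), max_eq_right (by linarith), max_eq_left (by linarith)]; ring
    · rw [abs_of_nonneg (by linarith), max_eq_left (by linarith), max_eq_right (by linarith)]; ring
  simp only [absDiffSum, hsplit, sum_map_add]
  rw [sum_map_sum_map M M (f := fun x y : ℕ => max ((y : ℤ) - x) 0)]
  exact ⟨_, rfl⟩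

lemma eq_replicate_add_replicate_add_filter {M : Multiset ℕ} (hM : ∀ x ∈ M, 1 ≤ x) :
    M = replicate (count 1 M) 1 + replicate (count 2 M) 2 + M.filter (3 ≤ ·) := by
  ext a
  rcases a with _ | _ | _ | a
  · have h0 : count 0 M = 0 := count_eq_zero.2 fun h => absurd (hM 0 h) (by omega)
    simp [count_replicate, h0]
  all_goals simp [count_replicate]

lemma card_eq_count_one_add_count_two_add_card_filter {M : Multiset ℕ} (hM : ∀ x ∈ M, 1 ≤ x) :
    card M = count 1 M + count 2 M + card (M.filter (3 ≤ ·)) := by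
  conv_lhs => rw [eq_replicate_add_replicate_add_filter hM]
  simp only [card_add, card_replicate]

lemma mul_card_lt_sum_of_exists_ne {R : Multiset ℕ} {a : ℕ} (hR : ∀ x ∈ R, a ≤ x) (h : ∃ x ∈ R, x ≠ a) :
    a * card R < R.sum := by
  simpa [mul_comm] using sum_lt_sum (f := fun _ => a) (g := id) hR
    (h.imp fun x ⟨hx, hne⟩ => ⟨hx, lt_of_le_of_ne (hR x hx) hne.symm⟩)

section TreeDegrees

variable {M : Multiset ℕ} (hM : ∀ x ∈ M, 1 ≤ x) (hsum : M.sum + 2 = 2 * card M)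
include hM hsum

lemma sum_filter_three_le_add_two :
    (M.filter (3 ≤ ·)).sum + 2 = count 1 M + 2 * card (M.filter (3 ≤ ·)) := by
  have hdec := eq_replicate_add_replicate_add_filter hM
  have hs := congrArg sum hdec
  have hc := congrArg card hdec
  simp only [sum_add, sum_replicate, card_add, card_replicate, smul_eq_mul] at hs hc
  omega

lemma card_filter_three_le_add_two_le : card (M.filter (3 ≤ ·)) + 2 ≤ count 1 M := by
  have := card_nsmul_le_sum (s := M.filter (3 ≤ ·)) (a := 3) (by simp)
  have := sum_filter_three_le_add_two hM hsum
  simp only [smul_eq_mul] at *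
  omega

lemma absDiffSum_self_eq :
    absDiffSum M M = 2 * count 1 M * ((card M : ℤ) - 2) + 2 * count 2 M * ((count 1 M : ℤ) - 2)
      + absDiffSum (M.filter (3 ≤ ·)) (M.filter (3 ≤ ·)) := by
  have hdec := eq_replicate_add_replicate_add_filter hM
  have hRsum := sum_filter_three_le_add_two hM hsum
  set L := count 1 M
  set b := count 2 M
  set R := M.filter (3 ≤ ·)
  have hR : ∀ y ∈ R, 3 ≤ y := fun y hy => (mem_filter.1 hy).2
  have hRsumZ : (R.sum : ℤ) = L + 2 * card R - 2 := by omega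
  have hcard : (card M : ℤ) = L + b + card R := by
    rw [hdec]; simp
  have hA : absDiffSum (replicate L 1) M = L * ((card M : ℤ) - 2) := by
    rw [absDiffSum_replicate_left_of_le hM]
    congr 1
    omega
  have hsplit : absDiffSum M M
      = absDiffSum (replicate L 1) M + absDiffSum (replicate b 2) M + absDiffSum M R := by
    nth_rewrite 1 [hdec]
    rw [absDiffSum_add_left, absDiffSum_add_left, absDiffSum_comm R]
  rw [hsplit, hA, hcard, hdec]
  simp only [absDiffSum_add_left, absDiffSum_add_right]
  rw [absDiffSum_comm (replicate b 2) (replicate L 1),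
    absDiffSum_replicate_left_of_le (N := replicate b 2) (a := 1)
      (fun y hy => by simp [eq_of_mem_replicate hy]),
    absDiffSum_replicate_left_of_le (N := replicate b 2) (a := 2)
      (fun y hy => by simp [eq_of_mem_replicate hy]),
    absDiffSum_replicate_left_of_le (N := R) (a := 1) (fun y hy => by have := hR y hy; omega),
    absDiffSum_replicate_left_of_le (N := R) (a := 2) (fun y hy => by have := hR y hy; omega)]
  simp only [sum_replicate, card_replicate, smul_eq_mul]
  push_cast
  rw [← Nat.cast_multiset_sum, hRsumZ]
  ring

lemma eq_replicate_of_card_filter_add_two (h : card (M.filter (3 ≤ ·)) + 2 = count 1 M) :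
    M = replicate (count 1 M) 1 + replicate (count 2 M) 2 + replicate (count 1 M - 2) 3 := by
  have hRsum := sum_filter_three_le_add_two hM hsum
  have hR : M.filter (3 ≤ ·) = replicate (card (M.filter (3 ≤ ·))) 3 := by
    refine eq_replicate_card.2 fun x hx => ?_
    by_contra hx3
    have := mul_card_lt_sum_of_exists_ne (R := M.filter (3 ≤ ·)) (fun y hy => (mem_filter.1 hy).2) ⟨x, hx, hx3⟩
    omega
  rw [show count 1 M - 2 = card (M.filter (3 ≤ ·)) by omega, ← hR]
  exact eq_replicate_add_replicate_add_filter hM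

lemma four_le_count_one (hpath : M ≠ replicate (card M - 2) 2 + {1, 1})
    (hspider : M ≠ replicate (card M - 4) 2 + {3, 1, 1, 1}) : 4 ≤ count 1 M := by
  have hRle := card_filter_three_le_add_two_le hM hsum
  have hRsum := sum_filter_three_le_add_two hM hsum
  have hcard := card_eq_count_one_add_count_two_add_card_filter hM
  by_contra! hL
  have htight : card (M.filter (3 ≤ ·)) + 2 = count 1 M := by
    rcases Nat.eq_zero_or_pos (card (M.filter (3 ≤ ·))) with h0 | hpos
    · rw [card_eq_zero.1 h0, sum_zero] at hRsum
      omega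
    · omega
  have hdec := eq_replicate_of_card_filter_add_two hM hsum htight
  obtain hL2 | hL3 : count 1 M = 2 ∨ count 1 M = 3 := by omega
  · refine hpath (hdec.trans ?_)
    rw [hL2, show card M - 2 = count 2 M by omega]
    ext a
    simp [count_replicate, count_cons, count_singleton]
  · refine hspider (hdec.trans ?_)
    rw [hL3, show card M - 4 = count 2 M by omega]
    ext a
    simp [count_replicate, count_cons, count_singleton]
    split_ifs <;> omega

lemma lt_absDiffSum_self (hn : 6 ≤ card M) (hpath : M ≠ replicate (card M - 2) 2 + {1, 1})
    (hspider : M ≠ replicate (card M - 4) 2 + {3, 1, 1, 1})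
    (htarget : M ≠ replicate (card M - 6) 2 + {3, 3, 1, 1, 1, 1}) :
    12 * (card M : ℤ) - 40 < absDiffSum M M := by
  have hL := four_le_count_one hM hsum hpath hspider
  have hRle := card_filter_three_le_add_two_le hM hsum
  have hcard := card_eq_count_one_add_count_two_add_card_filter hM
  have hRR := absDiffSum_nonneg (M.filter (3 ≤ ·)) (M.filter (3 ≤ ·))
  rw [absDiffSum_self_eq hM hsum]
  rcases hL.eq_or_lt with hL4 | hL5
  · have hR : card (M.filter (3 ≤ ·)) < 2 := by
      by_contra hR
      refine htarget ((eq_replicate_of_card_filter_add_two hM hsum (by omega)).trans ?_)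
      rw [← hL4, show card M - 6 = count 2 M by omega]
      ext a
      simp [count_replicate, count_cons, count_singleton]
      split_ifs <;> omega
    rw [← hL4]
    push_cast
    omega
  · obtain hL5 | hL6 : count 1 M = 5 ∨ 6 ≤ count 1 M := by omega
    · rw [hL5]
      push_cast
      omega
    · have hL6' : (6 : ℤ) ≤ count 1 M := by exact_mod_cast hL6
      have hn' : (6 : ℤ) ≤ card M := by exact_mod_cast hn
      nlinarith [mul_le_mul_of_nonneg_right hL6' (by linarith : (0 : ℤ) ≤ card M - 2),
        mul_nonneg (Nat.cast_nonneg (α := ℤ) (count 2 M)) (by linarith : (0 : ℤ) ≤ count 1 M - 2)]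

end TreeDegrees

lemma absDiffSum_self_replicate_add_three_three_one_one_one_one (k : ℕ) :
    absDiffSum (replicate k 2 + {3, 3, 1, 1, 1, 1}) (replicate k 2 + {3, 3, 1, 1, 1, 1})
      = 12 * k + 32 := by
  simp [absDiffSum, insert_eq_cons, map_replicate, sum_replicate]
  ring

end Multiset

namespace SimpleGraph

variable {V : Type*} [Fintype V] (G : SimpleGraph V) [DecidableRel G.Adj]

lemma irrT_eq_absDiffSum_div_two : irrT G = (degSeq G).absDiffSum (degSeq G) / 2 := by
  simp only [irrT, Multiset.absDiffSum, degSeq, Multiset.map_map, Function.comp_def,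
    Finset.sum_eq_multiset_sum]

lemma card_degSeq : Multiset.card (degSeq G) = Fintype.card V := by
  simp [degSeq]

lemma sum_degSeq : (degSeq G).sum = 2 * #G.edgeFinset := by
  rw [degSeq, ← Finset.sum_eq_multiset_sum, sum_degrees_eq_twice_card_edges]

variable {G}

lemma Preconnected.one_le_of_mem_degSeq [Nontrivial V] (hG : G.Preconnected) {d : ℕ}
    (hd : d ∈ degSeq G) : 1 ≤ d := by
  obtain ⟨v, -, rfl⟩ := Multiset.mem_map.1 hd
  exact hG.degree_pos_of_nontrivial v

lemma IsTree.sum_degSeq_add_two (hG : G.IsTree) :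
    (degSeq G).sum + 2 = 2 * Multiset.card (degSeq G) := by
  rw [sum_degSeq, card_degSeq, ← hG.card_edgeFinset]
  ring

end SimpleGraph

theorem tree_third_min_irrT {V : Type*} [Fintype V] (G : SimpleGraph V) [DecidableRel G.Adj]
    (hT : G.IsTree) (n : ℕ) (hn : 6 ≤ n) (hcard : Fintype.card V = n)
    (hnp : degSeq G ≠ Multiset.replicate (n - 2) 2 + {1, 1})
    (hns : degSeq G ≠ Multiset.replicate (n - 4) 2 + {3, 1, 1, 1}) :
    6 * n - 20 ≤ irrT G ∧
      (irrT G = 6 * n - 20 ↔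
        degSeq G = Multiset.replicate (n - 6) 2 + {3, 3, 1, 1, 1, 1}) := by
  have : Nontrivial V := Fintype.one_lt_card_iff_nontrivial.1 (by omega)
  have hpos : ∀ d ∈ degSeq G, 1 ≤ d := fun _ => hT.connected.preconnected.one_le_of_mem_degSeq
  have hsum := hT.sum_degSeq_add_two
  have hcardM : Multiset.card (degSeq G) = n := (G.card_degSeq).trans hcard
  obtain ⟨k, hk⟩ := (degSeq G).even_absDiffSum_self
  rw [G.irrT_eq_absDiffSum_div_two, hk]
  by_cases htarget : degSeq G = Multiset.replicate (n - 6) 2 + {3, 3, 1, 1, 1, 1}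
  · have hD := Multiset.absDiffSum_self_replicate_add_three_three_one_one_one_one (n - 6)
    rw [← htarget, hk] at hD
    simp only [htarget, iff_true]
    omega
  · have hD := Multiset.lt_absDiffSum_self hpos hsum (by omega) (by rwa [hcardM]) (by rwa [hcardM])
      (by rwa [hcardM])
    rw [hcardM, hk] at hD
    simp only [htarget, iff_false]
    omega
end

section
/- Let n ≥ 5 and let G be a unicyclic graph on n vertices that is not a cycle and whose degree sequence is not (3, 2, …, 2, 1). Then irr_t(G) ≥ 4n − 8, with equality if and only if the degree sequence of G is (3, 3, 2, …, 2, 1, 1). -/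
open Finset

/-!
Write `d` for the degree function and `k`, `b` for the numbers of vertices of degree 1
and 2. Since `|x - y| = (x - y)⁺ + (y - x)⁺`, `irr_t G = ∑_v ∑_u (d u - d v)⁺`. All degrees
are positive and sum to `2n`, so in this sum the column of a leaf is `∑_u (d u - 1) = n` and
the column of a vertex of degree 2 is `∑_u (d u - 2)⁺ = k`; hence `irr_t G ≥ k (n + b)`.
Every vertex of degree at least 3 contributes at least 1 to `∑_u (d u - 2)⁺ = k`, so there
are at most `k` of them and `n ≤ 2k + b`. The cycle is the case `k = 0` and the sequence
`(3, 2, …, 2, 1)` the case `k = 1`; for `k ≥ 2` the bound `k (n + b) ≥ 4n - 8` holds, with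
equality only for `k = 2`, `b = n - 4`, and then both remaining vertices have degree 3.
-/

lemma Nat.abs_cast_sub_cast (a b : ℕ) :
    |(a : ℤ) - b| = ((a - b : ℕ) : ℤ) + ((b - a : ℕ) : ℤ) := by
  rcases le_total a b with h | h
  · rw [abs_of_nonpos (by omega), Nat.sub_eq_zero_of_le h, Nat.cast_sub h]; ring
  · rw [abs_of_nonneg (by omega), Nat.sub_eq_zero_of_le h, Nat.cast_sub h]; ring

section ExcessOver

variable {V : Type*} [Fintype V]

/-- Truncated subtraction makes this `∑ u, (d u - c)⁺`. -/
def excessOver (d : V → ℕ) (c : ℕ) : ℕ := ∑ u, (d u - c)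

lemma sum_sum_abs_sub_eq_two_mul (d : V → ℕ) :
    ∑ u, ∑ v, |(d u : ℤ) - d v| = 2 * ∑ v, (excessOver d (d v) : ℤ) := by
  simp only [Nat.abs_cast_sub_cast, sum_add_distrib, excessOver, Nat.cast_sum]
  rw [sum_comm (f := fun u v => ((d u - d v : ℕ) : ℤ))]
  ring

lemma sum_excessOver_eq_map (d : V → ℕ) :
    ∑ v, excessOver d (d v) =
      ((univ.val.map d).map fun c => ((univ.val.map d).map (· - c)).sum).sum := by
  simp only [excessOver, Finset.sum, Multiset.map_map, Function.comp_def]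

lemma excessOver_eq_zero_iff (d : V → ℕ) {c : ℕ} :
    excessOver d c = 0 ↔ ∀ u, d u ≤ c := by
  simp [excessOver, sum_eq_zero_iff, Nat.sub_eq_zero_iff_le]

lemma card_le_excessOver_two (d : V → ℕ) : #{u | 3 ≤ d u} ≤ excessOver d 2 := by
  rw [card_filter]
  exact sum_le_sum fun u _ => by split_ifs <;> omega

lemma eq_three_of_card_eq_excessOver_two (d : V → ℕ) (h : #{u | 3 ≤ d u} = excessOver d 2)
    {v : V} (hv : 3 ≤ d v) : d v = 3 := by
  rw [card_filter, excessOver, sum_eq_sum_iff_of_le fun u _ => by split_ifs <;> omega] at h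
  have := h v (mem_univ v)
  simp only [hv, if_true] at this
  omega

lemma excessOver_one {d : V → ℕ} (hpos : ∀ v, 1 ≤ d v)
    (hsum : ∑ v, d v = 2 * Fintype.card V) : excessOver d 1 = Fintype.card V := by
  have : ∑ u, (d u - 1 + 1) = ∑ u, d u := sum_congr rfl fun u _ => by have := hpos u; omega
  rw [sum_add_distrib, hsum] at this
  simp only [sum_const, card_univ, smul_eq_mul, mul_one] at this
  unfold excessOver
  omega

lemma excessOver_two {d : V → ℕ} (hpos : ∀ v, 1 ≤ d v)
    (hsum : ∑ v, d v = 2 * Fintype.card V) : excessOver d 2 = #{u | d u = 1} := by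
  have : ∑ u, (d u - 2 + 2) = ∑ u, (d u + if d u = 1 then 1 else 0) :=
    sum_congr rfl fun u _ => by have := hpos u; split_ifs <;> omega
  rw [sum_add_distrib, sum_add_distrib, hsum, ← card_filter] at this
  simp only [sum_const, card_univ, smul_eq_mul] at this
  unfold excessOver
  omega

lemma card_eq_one_add_card_eq_two_add_card_three_le {d : V → ℕ} (hpos : ∀ v, 1 ≤ d v) :
    #{u | d u = 1} + #{u | d u = 2} + #{u | 3 ≤ d u} = Fintype.card V := by
  simp only [card_filter, ← sum_add_distrib]
  rw [← card_univ, card_eq_sum_ones]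
  exact sum_congr rfl fun u _ => by have := hpos u; split_ifs <;> omega

lemma mul_le_sum_excessOver {d : V → ℕ} (hpos : ∀ v, 1 ≤ d v)
    (hsum : ∑ v, d v = 2 * Fintype.card V) :
    #{u | d u = 1} * (Fintype.card V + #{u | d u = 2}) ≤ ∑ v, excessOver d (d v) := by
  calc #{u | d u = 1} * (Fintype.card V + #{u | d u = 2})
      = ∑ v, ((if d v = 1 then Fintype.card V else 0) +
          if d v = 2 then #{u | d u = 1} else 0) := by
        simp only [sum_add_distrib, sum_ite, sum_const, smul_eq_mul]; ring
    _ ≤ ∑ v, excessOver d (d v) := sum_le_sum fun v _ => by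
        split_ifs with h1 h2 h2
        · omega
        · rw [h1, excessOver_one hpos hsum]; omega
        · rw [h2, excessOver_two hpos hsum]; omega
        · omega

lemma map_univ_eq_replicate {d : V → ℕ} (hpos : ∀ v, 1 ≤ d v) (hle : ∀ v, d v ≤ 3) :
    univ.val.map d = Multiset.replicate #{u | d u = 1} 1 + Multiset.replicate #{u | d u = 2} 2 +
      Multiset.replicate #{u | 3 ≤ d u} 3 := by
  ext a
  simp only [Multiset.count_map, Multiset.count_add, Multiset.count_replicate]
  change #{u | a = d u} = _
  obtain rfl | rfl | rfl | ha : a = 1 ∨ a = 2 ∨ a = 3 ∨ (a ≠ 1 ∧ a ≠ 2 ∧ a ≠ 3) := by omega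
  · simp [eq_comm]
  · simp [eq_comm]
  · rw [if_neg (by decide), if_neg (by decide), if_pos rfl, zero_add, zero_add]
    exact congrArg card
      (filter_congr fun u _ => ⟨le_of_eq, fun h => (le_antisymm (hle u) h).symm⟩)
  · simp only [if_neg (Ne.symm ha.1), if_neg (Ne.symm ha.2.1), if_neg (Ne.symm ha.2.2)]
    exact card_filter_eq_zero_iff.2 fun u _ => by
      have := hle u
      have := hpos u
      omega

lemma le_three_of_card_three_le_eq {d : V → ℕ} (hpos : ∀ v, 1 ≤ d v)
    (hsum : ∑ v, d v = 2 * Fintype.card V) (h : #{u | 3 ≤ d u} = #{u | d u = 1}) (v : V) :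
    d v ≤ 3 := by
  have := eq_three_of_card_eq_excessOver_two d (h.trans (excessOver_two hpos hsum).symm) (v := v)
  omega

lemma two_le_card_eq_one {d : V → ℕ} (hpos : ∀ v, 1 ≤ d v)
    (hsum : ∑ v, d v = 2 * Fintype.card V) (hcyc : ¬ ∀ v, d v = 2)
    (hns : univ.val.map d ≠ Multiset.replicate (Fintype.card V - 2) 2 + {3, 1}) :
    2 ≤ #{u | d u = 1} := by
  have hC : #{u | 3 ≤ d u} ≤ #{u | d u = 1} :=
    excessOver_two hpos hsum ▸ card_le_excessOver_two d
  have hpart := card_eq_one_add_card_eq_two_add_card_three_le hpos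
  by_contra! hk
  interval_cases hk' : #{u | d u = 1}
  · apply hcyc
    intro v
    have h1 := card_filter_eq_zero_iff.1 hk' v (mem_univ v)
    have h3 := card_filter_eq_zero_iff.1 (Nat.le_zero.1 hC) v (mem_univ v)
    have := hpos v
    omega
  · apply hns
    have hp : #{u | 3 ≤ d u} = 1 := by
      refine le_antisymm hC (Nat.pos_of_ne_zero fun hp => ?_)
      have h2 : excessOver d 2 = 0 := (excessOver_eq_zero_iff d).2 fun u => by
        have := card_filter_eq_zero_iff.1 hp u (mem_univ u)
        omega
      rw [excessOver_two hpos hsum] at h2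
      omega
    rw [map_univ_eq_replicate hpos (le_three_of_card_three_le_eq hpos hsum (hp.trans hk'.symm)),
      hk', hp, show #{u | d u = 2} = Fintype.card V - 2 by omega,
      show ({3, 1} : Multiset ℕ) = Multiset.replicate 1 3 + Multiset.replicate 1 1 from rfl]
    abel

lemma map_univ_eq_of_card_eq_two {d : V → ℕ} (hpos : ∀ v, 1 ≤ d v)
    (hsum : ∑ v, d v = 2 * Fintype.card V) (hk : #{u | d u = 1} = 2)
    (hb : #{u | d u = 2} + 4 = Fintype.card V) :
    univ.val.map d = Multiset.replicate (Fintype.card V - 4) 2 + {3, 3, 1, 1} := by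
  have hpart := card_eq_one_add_card_eq_two_add_card_three_le hpos
  rw [map_univ_eq_replicate hpos (le_three_of_card_three_le_eq hpos hsum (by omega)),
    show #{u | 3 ≤ d u} = 2 by omega, hk, ← hb, Nat.add_sub_cancel,
    show ({3, 3, 1, 1} : Multiset ℕ) = Multiset.replicate 2 3 + Multiset.replicate 2 1 from rfl]
  abel

end ExcessOver

lemma four_mul_le_mul_add_eight {k b n : ℕ} (hk : 2 ≤ k) (hb : n ≤ 2 * k + b) (hn : 5 ≤ n) :
    4 * n ≤ k * (n + b) + 8 := by
  nlinarith

lemma eq_two_of_mul_add_eight_le {k b n : ℕ} (hk : 2 ≤ k) (hb : n ≤ 2 * k + b)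
    (h : k * (n + b) + 8 ≤ 4 * n) : k = 2 ∧ b + 4 = n := by
  rcases Nat.lt_or_ge k 4 with h4 | h4
  · interval_cases k <;> omega
  · nlinarith

namespace SimpleGraph

variable {V : Type*} [Fintype V] (G : SimpleGraph V) [DecidableRel G.Adj]

lemma irrT_eq_sum_excessOver :
    irrT G = ∑ v, (excessOver (fun u => G.degree u) (G.degree v) : ℤ) := by
  rw [irrT, sum_sum_abs_sub_eq_two_mul, Int.mul_ediv_cancel_left _ two_ne_zero]

lemma irrT_eq_of_degSeq_eq {m : ℕ} (h : degSeq G = Multiset.replicate m 2 + {3, 3, 1, 1}) :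
    irrT G = 4 * m + 8 := by
  rw [irrT_eq_sum_excessOver, ← Nat.cast_sum, sum_excessOver_eq_map]
  change ((((degSeq G).map fun c => ((degSeq G).map (· - c)).sum).sum : ℕ) : ℤ) = _
  rw [h]
  simp [Multiset.map_replicate, Multiset.sum_replicate]
  ring

end SimpleGraph

theorem unicyclic_third_min_irrT {V : Type*} [Fintype V] (G : SimpleGraph V)
    [DecidableRel G.Adj]
    (hconn : G.Connected) (n : ℕ) (hn : 5 ≤ n) (hcard : Fintype.card V = n)
    (hedges : G.edgeFinset.card = n)
    (hnotcycle : ¬ ∀ v : V, G.degree v = 2)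
    (hns : degSeq G ≠ Multiset.replicate (n - 2) 2 + {3, 1}) :
    4 * n - 8 ≤ irrT G ∧
      (irrT G = 4 * n - 8 ↔
        degSeq G = Multiset.replicate (n - 4) 2 + {3, 3, 1, 1}) := by
  subst hcard
  have : Nontrivial V := Fintype.one_lt_card_iff_nontrivial.1 (by omega)
  have hpos : ∀ v, 1 ≤ G.degree v := fun v => hconn.preconnected.degree_pos_of_nontrivial v
  have hsum : ∑ v, G.degree v = 2 * Fintype.card V := by
    rw [G.sum_degrees_eq_twice_card_edges, hedges]
  have hk := two_le_card_eq_one hpos hsum hnotcycle hns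
  have hb : Fintype.card V ≤ 2 * #{u | G.degree u = 1} + #{u | G.degree u = 2} := by
    have := card_eq_one_add_card_eq_two_add_card_three_le hpos
    have := excessOver_two hpos hsum ▸ card_le_excessOver_two (fun u => G.degree u)
    omega
  have hbound : ((#{u | G.degree u = 1} * (Fintype.card V + #{u | G.degree u = 2}) : ℕ) : ℤ)
      ≤ irrT G := by
    rw [G.irrT_eq_sum_excessOver, ← Nat.cast_sum]
    exact_mod_cast mul_le_sum_excessOver hpos hsum
  have hlow := four_mul_le_mul_add_eight hk hb hn
  refine ⟨by omega, fun h => ?_, fun h => by rw [G.irrT_eq_of_degSeq_eq h]; omega⟩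
  obtain ⟨hk2, hb4⟩ := eq_two_of_mul_add_eight_le hk hb (by omega)
  exact map_univ_eq_of_card_eq_two hpos hsum hk2 hb4
end

section
/- Let G be a bicyclic graph on n ≥ 7 vertices whose degree sequence is neither (3,3,2,…,2) nor (4,2,…,2). Then irr_t(G) ≥ 4n − 10, with equality if and only if the degree sequence of G is (3, 3, 3, 2, …, 2, 1). -/
open Finset

/-! Let `s` be the degree multiset of a graph with `n` vertices, `n + 1` edges and no isolated
vertex; let `a`, `b` be the multiplicities of `1` and `2` in `s`, and let `c` collect the degrees
`≥ 3`, with `k = |c|` and `m = Σc`. The row sums `Σ_{y ∈ s} |x - y|` equal `n + 2` for `x = 1`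
and `2a + 2` for `x = 2` (as `Σ_{y ∈ s} (y - 2) = 2`), and are at least `n x - (2n + 2)` for
every `x`. Summing, `Σ_{x, y ∈ s} |x - y| ≥ a(n + 2) + b(2a + 2) + n m - k(2n + 2)`, where
`m = a + 2 + 2k ≥ 3k`. If `a = 0` then `k ≤ 2` and `s` is one of the two excluded sequences.
Otherwise the bound is at least `8n - 20`, with equality only for `a = 1`, `k = 3`, that is,
`c = {3, 3, 3}`. -/

lemma eight_mul_sub_twenty_le_bound {n a b k m : ℤ} (hn : 7 ≤ n) (ha : 1 ≤ a) (hb : 0 ≤ b)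
    (hcard : a + b + k = n) (hsum : a + 2 * b + m = 2 * n + 2) (hm : 3 * k ≤ m) :
    8 * n - 20 ≤ a * (n + 2) + b * (2 * a + 2) + n * m - k * (2 * n + 2) := by
  obtain rfl : b = n - a - k := by linarith
  obtain rfl : m = 2 * n + 2 - a - 2 * (n - a - k) := by linarith
  nlinarith [mul_nonneg (sub_nonneg.2 ha) (by linarith : (0 : ℤ) ≤ n - 7),
    mul_nonneg (sub_nonneg.2 ha) hb]

lemma eq_one_and_eq_three_of_bound_lt {n a b k m : ℤ} (hn : 7 ≤ n) (ha : 1 ≤ a) (hb : 0 ≤ b)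
    (hcard : a + b + k = n) (hsum : a + 2 * b + m = 2 * n + 2) (hm : 3 * k ≤ m)
    (hlt : a * (n + 2) + b * (2 * a + 2) + n * m - k * (2 * n + 2) < 8 * n - 18) :
    a = 1 ∧ k = 3 := by
  obtain rfl : b = n - a - k := by linarith
  obtain rfl : m = 2 * n + 2 - a - 2 * (n - a - k) := by linarith
  obtain rfl : a = 1 := by
    nlinarith [mul_nonneg (sub_nonneg.2 ha) (by linarith : (0 : ℤ) ≤ n - 7),
      mul_nonneg (sub_nonneg.2 ha) hb]
  constructor <;> nlinarith

namespace Multiset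

lemma eq_replicate_of_sum_le {s : Multiset ℕ} {m : ℕ} (hm : ∀ x ∈ s, m ≤ x)
    (hsum : s.sum ≤ card s * m) : s = replicate (card s) m := by
  refine eq_replicate_card.mpr fun x hx => le_antisymm ?_ (hm x hx)
  obtain ⟨t, rfl⟩ := exists_cons_of_mem hx
  have ht : card t • m ≤ t.sum := card_nsmul_le_sum fun y hy => hm y (mem_cons_of_mem hy)
  simp only [sum_cons, card_cons, smul_eq_mul] at hsum ht
  linarith

lemma eq_replicate_one_add_replicate_two_add_filter {s : Multiset ℕ} (h0 : 0 ∉ s) :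
    s = replicate (s.count 1) 1 + replicate (s.count 2) 2 + s.filter (3 ≤ ·) := by
  ext x
  simp only [count_add, count_replicate, count_filter]
  rcases (show x = 0 ∨ x = 1 ∨ x = 2 ∨ 3 ≤ x by omega) with rfl | rfl | rfl | hx
  · simpa using h0
  · simp
  · simp
  · simp [hx]; omega

lemma count_one_add_count_two_add_card_filter {s : Multiset ℕ} (h0 : 0 ∉ s) :
    s.count 1 + s.count 2 + card (s.filter (3 ≤ ·)) = card s := by
  conv_rhs => rw [eq_replicate_one_add_replicate_two_add_filter h0]
  simp

lemma count_one_add_two_mul_count_two_add_sum_filter {s : Multiset ℕ} (h0 : 0 ∉ s) :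
    s.count 1 + 2 * s.count 2 + (s.filter (3 ≤ ·)).sum = s.sum := by
  conv_rhs => rw [eq_replicate_one_add_replicate_two_add_filter h0]
  simp [mul_comm]

lemma three_mul_card_filter_le_sum_filter (s : Multiset ℕ) :
    3 * card (s.filter (3 ≤ ·)) ≤ (s.filter (3 ≤ ·)).sum := by
  have h : ∀ x ∈ s.filter (3 ≤ ·), 3 ≤ x := fun x hx => (mem_filter.1 hx).2
  simpa [mul_comm] using card_nsmul_le_sum h

def distSum (s : Multiset ℕ) (x : ℕ) : ℤ := (s.map fun y : ℕ => |(x : ℤ) - y|).sum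

def totalDist (s : Multiset ℕ) : ℤ := (s.map (distSum s)).sum

@[simp] lemma distSum_zero (x : ℕ) : distSum 0 x = 0 := rfl

@[simp] lemma distSum_cons (a : ℕ) (s : Multiset ℕ) (x : ℕ) :
    distSum (a ::ₘ s) x = |(x : ℤ) - a| + distSum s x := by
  simp [distSum]

lemma distSum_one {s : Multiset ℕ} (h0 : 0 ∉ s) : distSum s 1 = s.sum - card s := by
  induction s using Multiset.induction_on with
  | empty => simp
  | cons a s ih =>
    rw [mem_cons, not_or] at h0
    rw [distSum_cons, ih h0.2, abs_of_nonpos (by omega)]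
    simp only [sum_cons, card_cons]
    push_cast; ring

lemma distSum_two {s : Multiset ℕ} (h0 : 0 ∉ s) :
    distSum s 2 = s.sum - 2 * card s + 2 * s.count 1 := by
  induction s using Multiset.induction_on with
  | empty => simp
  | cons a s ih =>
    rw [mem_cons, not_or] at h0
    rw [distSum_cons, ih h0.2]
    simp only [sum_cons, card_cons, count_cons]
    rcases (show a = 1 ∨ 2 ≤ a by omega) with rfl | ha
    · norm_num; ring
    · rw [abs_of_nonpos (by omega), if_neg (by omega)]
      push_cast; ring

lemma sub_le_distSum (s : Multiset ℕ) (x : ℕ) : x * card s - s.sum ≤ distSum s x := by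
  induction s using Multiset.induction_on with
  | empty => simp
  | cons a s ih =>
    rw [distSum_cons]
    simp only [sum_cons, card_cons]
    push_cast at ih ⊢
    linarith [le_abs_self ((x : ℤ) - a)]

lemma sub_le_sum_map_distSum (s t : Multiset ℕ) :
    card s * t.sum - card t * s.sum ≤ (t.map (distSum s)).sum := by
  induction t using Multiset.induction_on with
  | empty => simp
  | cons x t ih =>
    have hx := sub_le_distSum s x
    simp only [sum_cons, card_cons, map_cons]
    push_cast at ih hx ⊢
    linarith

lemma le_totalDist {s : Multiset ℕ} (h0 : 0 ∉ s) :
    let a : ℤ := s.count 1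
    let c := s.filter (3 ≤ ·)
    a * (s.sum - card s) + s.count 2 * (s.sum - 2 * card s + 2 * a)
      + (card s * c.sum - card c * s.sum) ≤ totalDist s := by
  intro a c
  have hsplit : totalDist s =
      ((replicate (s.count 1) 1 + replicate (s.count 2) 2 + c).map (distSum s)).sum := by
    rw [← eq_replicate_one_add_replicate_two_add_filter h0, totalDist]
  rw [hsplit, map_add, map_add, sum_add, sum_add, map_replicate, map_replicate, sum_replicate,
    sum_replicate, distSum_one h0, distSum_two h0, nsmul_eq_mul, nsmul_eq_mul]
  linarith [sub_le_sum_map_distSum s c]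

lemma totalDist_replicate_two_add {n : ℕ} (hn : 4 ≤ n) :
    totalDist (replicate (n - 4) 2 + {3, 3, 3, 1}) = 8 * n - 20 := by
  obtain ⟨m, rfl⟩ : ∃ m, n = m + 4 := ⟨n - 4, by omega⟩
  simp [totalDist, distSum, map_replicate, sum_replicate]
  ring

lemma eq_of_count_one_eq_zero {s : Multiset ℕ} (h0 : 0 ∉ s) (hsum : s.sum = 2 * card s + 2)
    (h1 : s.count 1 = 0) :
    s = replicate (card s - 1) 2 + {4} ∨ s = replicate (card s - 2) 2 + {3, 3} := by
  have hdec := eq_replicate_one_add_replicate_two_add_filter h0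
  have hcard := count_one_add_count_two_add_card_filter h0
  have hcsum := count_one_add_two_mul_count_two_add_sum_filter h0
  have hc3 := three_mul_card_filter_le_sum_filter s
  set c := s.filter (3 ≤ ·)
  rw [h1, replicate_zero, zero_add] at hdec
  rcases (show card c = 0 ∨ card c = 1 ∨ card c = 2 by omega) with hk | hk | hk
  · rw [card_eq_zero.1 hk, sum_zero] at hcsum
    omega
  · obtain ⟨x, hx⟩ := card_eq_one.1 hk
    rw [hx, sum_singleton] at hcsum
    left
    conv_lhs => rw [hdec, hx]
    congr 2 <;> omega
  · have hc : c = replicate 2 3 := by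
      rw [← hk]
      exact eq_replicate_of_sum_le (fun x hx => (mem_filter.1 hx).2) (by omega)
    right
    conv_lhs => rw [hdec, hc]
    congr 2
    omega

theorem eight_mul_sub_twenty_le_totalDist_and_eq_of_lt {s : Multiset ℕ} {n : ℕ} (hn : 7 ≤ n)
    (hcard : card s = n) (h0 : 0 ∉ s) (hsum : s.sum = 2 * n + 2)
    (h1 : s ≠ replicate (n - 2) 2 + {3, 3}) (h2 : s ≠ replicate (n - 1) 2 + {4}) :
    8 * n - 20 ≤ totalDist s ∧
      (totalDist s < 8 * n - 18 → s = replicate (n - 4) 2 + {3, 3, 3, 1}) := by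
  subst hcard
  have ha : 1 ≤ s.count 1 := by
    by_contra ha
    rcases eq_of_count_one_eq_zero h0 hsum (by omega) with h | h
    exacts [h2 h, h1 h]
  have hdec := eq_replicate_one_add_replicate_two_add_filter h0
  have hcard := count_one_add_count_two_add_card_filter h0
  have hcsum := count_one_add_two_mul_count_two_add_sum_filter h0
  have hS := le_totalDist h0
  have hc3 := three_mul_card_filter_le_sum_filter s
  set c := s.filter (3 ≤ ·)
  simp only [hsum, Nat.cast_add, Nat.cast_mul, Nat.cast_ofNat] at hS
  have hn' : (7 : ℤ) ≤ card s := by exact_mod_cast hn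
  have ha' : (1 : ℤ) ≤ s.count 1 := by exact_mod_cast ha
  have hcard' : (s.count 1 : ℤ) + s.count 2 + card c = card s := by exact_mod_cast hcard
  have hcsum' : (s.count 1 : ℤ) + 2 * s.count 2 + c.sum = 2 * card s + 2 := by
    exact_mod_cast hcsum.trans hsum
  have hc3' : 3 * (card c : ℤ) ≤ c.sum := by exact_mod_cast hc3
  refine ⟨?_, fun hlt => ?_⟩
  · linarith [eight_mul_sub_twenty_le_bound hn' ha' (Nat.cast_nonneg _) hcard' hcsum' hc3']
  obtain ⟨ha1, hk3⟩ :=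
    eq_one_and_eq_three_of_bound_lt hn' ha' (Nat.cast_nonneg _) hcard' hcsum' hc3' (by linarith)
  have hk : card c = 3 := by exact_mod_cast hk3
  have hc : c = replicate 3 3 := by
    have := eq_replicate_of_sum_le (s := c) (m := 3) (fun x hx => (mem_filter.1 hx).2) (by omega)
    rwa [hk] at this
  conv_lhs => rw [hdec, hc, (show s.count 1 = 1 by exact_mod_cast ha1),
    (show s.count 2 = card s - 4 by omega)]
  simp only [insert_eq_cons, replicate_succ, replicate_zero, ← singleton_add]
  abel

end Multiset

section Graph

variable {V : Type*} [Fintype V] (G : SimpleGraph V) [DecidableRel G.Adj]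

lemma irrT_eq_totalDist_div_two : irrT G = (degSeq G).totalDist / 2 := by
  simp only [irrT, Multiset.totalDist, Multiset.distSum, degSeq, Multiset.map_map,
    Function.comp_def, ← Finset.sum_eq_multiset_sum]

lemma card_degSeq : Multiset.card (degSeq G) = Fintype.card V := by
  simp [degSeq]

lemma sum_degSeq : (degSeq G).sum = 2 * #G.edgeFinset := by
  rw [degSeq, ← Finset.sum_eq_multiset_sum, G.sum_degrees_eq_twice_card_edges]

lemma zero_notMem_degSeq [Nontrivial V] (hG : G.Preconnected) : 0 ∉ degSeq G := by
  simp [degSeq, (hG.degree_pos_of_nontrivial _).ne']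

end Graph

theorem bicyclic_third_min_irrT {V : Type*} [Fintype V] (G : SimpleGraph V)
    [DecidableRel G.Adj]
    (hconn : G.Connected) (n : ℕ) (hn : 7 ≤ n) (hcard : Fintype.card V = n)
    (hedges : G.edgeFinset.card = n + 1)
    (h1 : degSeq G ≠ Multiset.replicate (n - 2) 2 + {3, 3})
    (h2 : degSeq G ≠ Multiset.replicate (n - 1) 2 + {4}) :
    4 * n - 10 ≤ irrT G ∧
      (irrT G = 4 * n - 10 ↔
        degSeq G = Multiset.replicate (n - 4) 2 + {3, 3, 3, 1}) := by
  have : Nontrivial V := Fintype.one_lt_card_iff_nontrivial.1 (by omega)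
  obtain ⟨hlow, hlt⟩ := Multiset.eight_mul_sub_twenty_le_totalDist_and_eq_of_lt hn
    ((card_degSeq G).trans hcard) (zero_notMem_degSeq G hconn.preconnected)
    (by rw [sum_degSeq, hedges]; ring) h1 h2
  rw [irrT_eq_totalDist_div_two]
  refine ⟨by omega, fun h => hlt (by omega), fun h => ?_⟩
  rw [h, Multiset.totalDist_replicate_two_add (by omega)]
  omega
end
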